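/- arXiv:2011.09981 — 3 statements merged into one kernel-verified Lean document; each statement's English description precedes it below -/
import Mathlib

section
/- Under the conditions S_I–S_IV on the sequence of random vectors of random length, for every n ≥ 2, every real x ≥ c₁ and every Δ > 0, the following identity holds: P( Z₊(n) + u_{ν₊(n)+1, γ₊(n)} ∈ [x, x+Δ) and τ₁ ≤ n ) = Q · P( Z*₊(n) ∈ [x, x+Δ) and γ*₊(n) = 0 ). -/
open MeasureTheory ProbabilityTheory Filter Real Set
open scoped ENNReal Topology

noncomputable section

namespace CompoundRenewal

/-- A sequence `{(τ_k, (u_{k,1}, …, u_{k,τ_k}))}_{k ≥ 1}` of mutually independent random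
vectors of random length satisfying conditions `S_I`–`S_IV`, together with the auxiliary
independent vector `(τ*, ζ*)` whose distribution is
`P(τ* = i, ζ* ∈ dy) = (1/Q) P(τ ≥ i + 1, u_i ∈ dy)`, `Q = E τ`.
The vector of index `k` is encoded as the pair `(τ_k, (u_{k,i})_{i ≤ τ_k})`, where the
array is extended by `0` for `i > τ_k` (and `u_{k,0} = 0`). -/
structure CRP (Ω : Type) [MeasureSpace Ω] where
  /-- the constant `c₁ > 0` of condition `S_II` -/
  c₁ : ℝ
  c₁_pos : 0 < c₁
  /-- the lengths `τ_k`, `k ≥ 1` (positive integers) -/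
  tauSeq : ℕ → Ω → ℕ
  /-- the weights `u_{k,i}`, `k ≥ 1`, `0 ≤ i ≤ τ_k` -/
  uSeq : ℕ → ℕ → Ω → ℝ
  tau_pos : ∀ k ω, 1 ≤ tauSeq k ω
  u_zero : ∀ k ω, uSeq k 0 ω = 0
  tau_meas : ∀ k, Measurable (tauSeq k)
  u_meas : ∀ k i, Measurable (uSeq k i)
  /-- `S_I` : mutual independence of the vectors of indices `k ≥ 1` -/
  indep : iIndepFun
    (fun k : ℕ => fun ω => ((tauSeq (k + 1) ω : ℕ),
      fun i : ℕ => if i ≤ tauSeq (k + 1) ω then uSeq (k + 1) i ω else 0)) ℙ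
  /-- `S_I` : the vectors of indices `k ≥ 2` are identically distributed -/
  ident : ∀ k : ℕ, 2 ≤ k →
    Measure.map (fun ω => ((tauSeq k ω : ℕ),
        fun i : ℕ => if i ≤ tauSeq k ω then uSeq k i ω else 0)) ℙ
      = Measure.map (fun ω => ((tauSeq 2 ω : ℕ),
        fun i : ℕ => if i ≤ tauSeq 2 ω then uSeq 2 i ω else 0)) ℙ
  /-- `S_II` : positivity, the lower bound `c₁` and the maximality of the last weight -/
  sII : ∀ᵐ ω ∂ℙ, 0 < uSeq 1 (tauSeq 1 ω) ω ∧
    ∀ k : ℕ, 2 ≤ k → ∀ i : ℕ, 1 ≤ i → i ≤ tauSeq k ω →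
      c₁ ≤ uSeq k i ω ∧ uSeq k i ω ≤ uSeq k (tauSeq k ω) ω
  /-- `S_III` : exponential moments -/
  sIII : ∃ C : ℝ, 0 < C ∧
    (∫⁻ ω, ENNReal.ofReal (Real.exp (C * (tauSeq 1 ω : ℝ))) ∂ℙ < ⊤) ∧
    (∫⁻ ω, ENNReal.ofReal (Real.exp (C * (tauSeq 2 ω : ℝ))) ∂ℙ < ⊤) ∧
    (∫⁻ ω, ENNReal.ofReal (Real.exp (C * uSeq 1 (tauSeq 1 ω) ω)) ∂ℙ < ⊤) ∧
    (∫⁻ ω, ENNReal.ofReal (Real.exp (C * uSeq 2 (tauSeq 2 ω) ω)) ∂ℙ < ⊤)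
  /-- `S_IV` : `P(τ = 1, u_τ ≥ y) > 0` for all `y` in some nonempty interval -/
  sIV : ∃ y₀ y₁ : ℝ, y₀ < y₁ ∧ ∀ y ∈ Set.Ioo y₀ y₁,
    0 < ℙ {ω | tauSeq 2 ω = 1 ∧ y ≤ uSeq 2 (tauSeq 2 ω) ω}
  /-- the auxiliary vector `(τ*, ζ*)` -/
  tauStar : Ω → ℕ
  zetaStar : Ω → ℝ
  tauStar_meas : Measurable tauStar
  zetaStar_meas : Measurable zetaStar
  /-- `(τ*, ζ*)` is independent of the whole sequence -/
  star_indep : IndepFun (fun ω => (tauStar ω, zetaStar ω))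
    (fun ω => fun k : ℕ => ((tauSeq (k + 1) ω : ℕ),
      fun i : ℕ => if i ≤ tauSeq (k + 1) ω then uSeq (k + 1) i ω else 0)) ℙ
  /-- the distribution of `(τ*, ζ*)` : `Q·P(τ* = i, ζ* ∈ s) = P(τ ≥ i + 1, u_i ∈ s)` -/
  star_dist : ∀ i : ℕ, ∀ s : Set ℝ, MeasurableSet s →
    ENNReal.ofReal (∫ ω, (tauSeq 2 ω : ℝ) ∂ℙ) * ℙ {ω | tauStar ω = i ∧ zetaStar ω ∈ s}
      = ℙ {ω | i + 1 ≤ tauSeq 2 ω ∧ uSeq 2 i ω ∈ s}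

variable {Ω : Type} [MeasureSpace Ω]

/-- `ζ_k = u_{k, τ_k}`. -/
def zetaSeq (P : CRP Ω) (k : ℕ) (ω : Ω) : ℝ := P.uSeq k (P.tauSeq k ω) ω

/-- `T_n = τ_1 + ⋯ + τ_n` (with `T_0 = 0`). -/
def Tn (P : CRP Ω) (n : ℕ) (ω : Ω) : ℕ := ∑ k ∈ Finset.Icc 1 n, P.tauSeq k ω

/-- `Z_n = ζ_1 + ⋯ + ζ_n` (with `Z_0 = 0`). -/
def Zn (P : CRP Ω) (n : ℕ) (ω : Ω) : ℝ := ∑ k ∈ Finset.Icc 1 n, zetaSeq P k ω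

/-- `ν₊(n) = max {k ≥ 0 : T_k ≤ n}`. -/
def nuP (P : CRP Ω) (n : ℕ) (ω : Ω) : ℕ := Nat.findGreatest (fun k => Tn P k ω ≤ n) n

/-- `γ₊(n) = n - T_{ν₊(n)}`. -/
def gamP (P : CRP Ω) (n : ℕ) (ω : Ω) : ℕ := n - Tn P (nuP P n ω) ω

/-- The compound renewal process `Z₊(n) = Z_{ν₊(n)}`. -/
def ZP (P : CRP Ω) (n : ℕ) (ω : Ω) : ℝ := Zn P (nuP P n ω) ω

/-- `Q = E τ`. -/
def Q (P : CRP Ω) : ℝ := ∫ ω, (P.tauSeq 2 ω : ℝ) ∂ℙ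

/-- The modified lengths: `τ*₁ = τ₁ + τ*`, `τ*_k = τ_k` for `k ≥ 2`. -/
def tauSt (P : CRP Ω) (k : ℕ) (ω : Ω) : ℕ :=
  if k = 1 then P.tauSeq 1 ω + P.tauStar ω else P.tauSeq k ω

/-- The modified weights: `ζ*₁ = ζ₁ + ζ*`, `ζ*_k = ζ_k` for `k ≥ 2`. -/
def zetaSt (P : CRP Ω) (k : ℕ) (ω : Ω) : ℝ :=
  if k = 1 then zetaSeq P 1 ω + P.zetaStar ω else zetaSeq P k ω

/-- `T*_n`. -/
def TnSt (P : CRP Ω) (n : ℕ) (ω : Ω) : ℕ := ∑ k ∈ Finset.Icc 1 n, tauSt P k ω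

/-- `Z*_n`. -/
def ZnSt (P : CRP Ω) (n : ℕ) (ω : Ω) : ℝ := ∑ k ∈ Finset.Icc 1 n, zetaSt P k ω

/-- `ν*₊(n)`. -/
def nuPSt (P : CRP Ω) (n : ℕ) (ω : Ω) : ℕ := Nat.findGreatest (fun k => TnSt P k ω ≤ n) n

/-- `γ*₊(n) = n - T*_{ν*₊(n)}`. -/
def gamPSt (P : CRP Ω) (n : ℕ) (ω : Ω) : ℕ := n - TnSt P (nuPSt P n ω) ω

/-- The modified compound renewal process `Z*₊(n) = Z*_{ν*₊(n)}`. -/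
def ZPSt (P : CRP Ω) (n : ℕ) (ω : Ω) : ℝ := ZnSt P (nuPSt P n ω) ω


/-!
Both events are split according to the number `m` of completed cycles, `ν₊(n) = m` on the left
and `ν*₊(n) = m` on the right. On `{ν₊(n) = m}` the left event says that the `(m+1)`-st vector is
still running at time `n`, i.e. `τ_{m+1} > n - T_m`, and that `Z_m + u_{m+1, n - T_m}` lies in the
interval; on `{ν*₊(n) = m}` the right event says that `τ* = n - T_m` and that `Z_m + ζ*` lies in
the interval. Given `(T_m, Z_m) = (t, z)`, the law of `(τ*, ζ*)` turns
`P(τ > n - t, z + u_{n-t} ∈ I)` into `Q · P(τ* = n - t, z + ζ* ∈ I)`, and since `(T_m, Z_m)` is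
independent both of the `(m+1)`-st vector and of `(τ*, ζ*)`, integrating over its law gives the
identity for every `m`.
-/

open Finset

theorem _root_.Nat.findGreatest_le_eq_iff {f : ℕ → ℕ} (hf : StrictMono f) (hf0 : f 0 = 0)
    {n m : ℕ} :
    Nat.findGreatest (fun k => f k ≤ n) n = m ↔ f m ≤ n ∧ n < f (m + 1) := by
  rw [Nat.findGreatest_eq_iff]
  constructor
  · rintro ⟨-, hm, hgt⟩
    refine ⟨?_, ?_⟩
    · rcases Nat.eq_zero_or_pos m with rfl | hpos
      · simp [hf0]
      · exact hm hpos.ne'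
    · by_contra! hle
      exact hgt (Nat.lt_succ_self m) ((hf.id_le (m + 1)).trans hle) hle
  · rintro ⟨h1, h2⟩
    refine ⟨(hf.id_le m).trans h1, fun _ => h1, fun k hmk _ hk => ?_⟩
    have := hf.monotone (show m + 1 ≤ k by omega)
    omega

theorem strictMono_sum_Icc_one {t : ℕ → ℕ} (ht : ∀ k, 0 < t k) :
    StrictMono fun m => ∑ k ∈ Icc 1 m, t k :=
  strictMono_nat_of_lt_succ fun m => by
    rw [sum_Icc_succ_top (by omega)]
    exact Nat.lt_add_of_pos_right (ht _)

theorem sum_Icc_one_ite_add {M : Type*} [AddCommMonoid M] (g : ℕ → M) (c : M) {m : ℕ}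
    (hm : 1 ≤ m) :
    ∑ k ∈ Icc 1 m, (if k = 1 then g 1 + c else g k) = ∑ k ∈ Icc 1 m, g k + c := by
  have hterm : ∀ k, (if k = 1 then g 1 + c else g k) = g k + if k = 1 then c else 0 := by
    intro k
    split_ifs with hk <;> simp [hk]
  rw [sum_congr rfl fun k _ => hterm k, sum_add_distrib, sum_ite_eq',
    if_pos (Finset.mem_Icc.2 ⟨le_rfl, hm⟩)]

theorem sum_Icc_one_eq_sum_range {M : Type*} [AddCommMonoid M] (f : ℕ → M) (m : ℕ) :
    ∑ k ∈ Icc 1 m, f k = ∑ j ∈ range m, f (j + 1) := by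
  rw [range_eq_Ico, sum_Ico_add' f 0 m 1]
  rfl

theorem measure_eq_sum_inter_fiber {α β : Type*} [MeasurableSpace α] {μ : Measure α}
    {f : α → β} (s : Finset β) {E : Set α} (hE : E ⊆ f ⁻¹' s)
    (hf : ∀ b ∈ s, MeasurableSet (f ⁻¹' {b})) :
    μ E = ∑ b ∈ s, μ (E ∩ f ⁻¹' {b}) :=
  calc μ E = μ.restrict E (f ⁻¹' s) := (Measure.restrict_apply_superset hE).symm
    _ = ∑ b ∈ s, μ.restrict E (f ⁻¹' {b}) := (sum_measure_preimage_singleton s hf).symm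
    _ = ∑ b ∈ s, μ (E ∩ f ⁻¹' {b}) :=
      sum_congr rfl fun b hb => by rw [Measure.restrict_apply (hf b hb), inter_comm]

theorem measure_prodMk_mem_eq_const_mul_of_indepFun {Ω α β γ : Type*} [MeasurableSpace Ω]
    [MeasurableSpace α] [MeasurableSpace β] [MeasurableSpace γ] {μ : Measure Ω}
    [IsFiniteMeasure μ] {X : Ω → α} {Y : Ω → β} {V : Ω → γ} (hX : Measurable X)
    (hY : Measurable Y) (hV : Measurable V) (hXY : IndepFun X Y μ) (hXV : IndepFun X V μ)
    {S : Set (α × β)} {S' : Set (α × γ)} (hS : MeasurableSet S) (hS' : MeasurableSet S')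
    (c : ℝ≥0∞) (h : ∀ a, μ {ω | (a, Y ω) ∈ S} = c * μ {ω | (a, V ω) ∈ S'}) :
    μ {ω | (X ω, Y ω) ∈ S} = c * μ {ω | (X ω, V ω) ∈ S'} := by
  have hsection : ∀ a, μ.map Y (Prod.mk a ⁻¹' S) = c * μ.map V (Prod.mk a ⁻¹' S') := fun a => by
    rw [Measure.map_apply hY (measurable_prodMk_left hS),
      Measure.map_apply hV (measurable_prodMk_left hS')]
    exact h a
  change μ ((fun ω => (X ω, Y ω)) ⁻¹' S) = c * μ ((fun ω => (X ω, V ω)) ⁻¹' S')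
  rw [← Measure.map_apply (hX.prodMk hY) hS, ← Measure.map_apply (hX.prodMk hV) hS',
    (indepFun_iff_map_prod_eq_prod_map_map hX.aemeasurable hY.aemeasurable).1 hXY,
    (indepFun_iff_map_prod_eq_prod_map_map hX.aemeasurable hV.aemeasurable).1 hXV,
    Measure.prod_apply hS, Measure.prod_apply hS', lintegral_congr hsection,
    lintegral_const_mul _ (measurable_measure_prodMk_left hS')]

theorem measurable_apply_fst {ι β : Type*} [Countable ι] [MeasurableSpace ι]
    [MeasurableSingletonClass ι] [MeasurableSpace β] :
    Measurable fun q : ι × (ι → β) => q.2 q.1 :=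
  measurable_from_prod_countable_right fun i => measurable_pi_apply i

def tauZeta (v : ℕ × (ℕ → ℝ)) : ℕ × ℝ := (v.1, v.2 v.1)

theorem measurable_tauZeta : Measurable tauZeta :=
  measurable_fst.prodMk measurable_apply_fst

namespace CRP

variable (P : CRP Ω)

theorem Tn_succ (m : ℕ) (ω : Ω) : Tn P (m + 1) ω = Tn P m ω + P.tauSeq (m + 1) ω :=
  sum_Icc_succ_top (by omega) _

theorem Tn_one (ω : Ω) : Tn P 1 ω = P.tauSeq 1 ω := by
  simp [Tn]

theorem strictMono_Tn (ω : Ω) : StrictMono fun m => Tn P m ω :=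
  strictMono_sum_Icc_one fun k => P.tau_pos k ω

theorem tauSt_pos (k : ℕ) (ω : Ω) : 0 < tauSt P k ω := by
  unfold tauSt
  split_ifs
  · exact Nat.add_pos_left (P.tau_pos 1 ω) _
  · exact P.tau_pos k ω

theorem strictMono_TnSt (ω : Ω) : StrictMono fun m => TnSt P m ω :=
  strictMono_sum_Icc_one fun k => P.tauSt_pos k ω

theorem TnSt_eq_add {m : ℕ} (hm : 1 ≤ m) (ω : Ω) : TnSt P m ω = Tn P m ω + P.tauStar ω :=
  sum_Icc_one_ite_add (P.tauSeq · ω) _ hm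

theorem ZnSt_eq_add {m : ℕ} (hm : 1 ≤ m) (ω : Ω) : ZnSt P m ω = Zn P m ω + P.zetaStar ω :=
  sum_Icc_one_ite_add (zetaSeq P · ω) _ hm

theorem nuP_eq_iff {n m : ℕ} {ω : Ω} : nuP P n ω = m ↔ Tn P m ω ≤ n ∧ n < Tn P (m + 1) ω :=
  Nat.findGreatest_le_eq_iff (P.strictMono_Tn ω) (by simp [Tn])

theorem nuPSt_eq_iff {n m : ℕ} {ω : Ω} :
    nuPSt P n ω = m ↔ TnSt P m ω ≤ n ∧ n < TnSt P (m + 1) ω :=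
  Nat.findGreatest_le_eq_iff (P.strictMono_TnSt ω) (by simp [TnSt])

theorem measurable_Tn (m : ℕ) : Measurable (Tn P m) :=
  Finset.measurable_sum _ fun k _ => P.tau_meas k

theorem measurable_TnSt (m : ℕ) : Measurable (TnSt P m) :=
  Finset.measurable_sum _ fun k _ => by
    unfold tauSt
    split_ifs
    exacts [(P.tau_meas 1).add P.tauStar_meas, P.tau_meas k]

theorem measurableSet_nuP_fiber (n m : ℕ) : MeasurableSet (nuP P n ⁻¹' {m}) := by
  have hfiber : nuP P n ⁻¹' {m} = {ω | Tn P m ω ≤ n ∧ n < Tn P (m + 1) ω} :=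
    Set.ext fun _ => P.nuP_eq_iff
  rw [hfiber]
  exact (measurableSet_le (P.measurable_Tn m) measurable_const).inter
    (measurableSet_lt measurable_const (P.measurable_Tn (m + 1)))

theorem measurableSet_nuPSt_fiber (n m : ℕ) : MeasurableSet (nuPSt P n ⁻¹' {m}) := by
  have hfiber : nuPSt P n ⁻¹' {m} = {ω | TnSt P m ω ≤ n ∧ n < TnSt P (m + 1) ω} :=
    Set.ext fun _ => P.nuPSt_eq_iff
  rw [hfiber]
  exact (measurableSet_le (P.measurable_TnSt m) measurable_const).inter
    (measurableSet_lt measurable_const (P.measurable_TnSt (m + 1)))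

/-- The `k`-th vector, encoded as in the fields `indep`, `ident` and `star_indep`. -/
def vec (k : ℕ) (ω : Ω) : ℕ × (ℕ → ℝ) :=
  (P.tauSeq k ω, fun i => if i ≤ P.tauSeq k ω then P.uSeq k i ω else 0)

theorem measurable_vec (k : ℕ) : Measurable (P.vec k) :=
  (P.tau_meas k).prodMk <| measurable_pi_lambda _ fun _ =>
    Measurable.ite ((P.tau_meas k) .of_discrete) (P.u_meas k _) measurable_const

theorem vec_snd_of_le {k i : ℕ} {ω : Ω} (h : i ≤ P.tauSeq k ω) :
    (P.vec k ω).2 i = P.uSeq k i ω :=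
  if_pos h

theorem tauZeta_vec (k : ℕ) (ω : Ω) : tauZeta (P.vec k ω) = (P.tauSeq k ω, zetaSeq P k ω) := by
  simp [tauZeta, vec, zetaSeq]

theorem measurable_star : Measurable fun ω => (P.tauStar ω, P.zetaStar ω) :=
  P.tauStar_meas.prodMk P.zetaStar_meas

theorem Tn_Zn_eq_sum (m : ℕ) (ω : Ω) :
    (Tn P m ω, Zn P m ω) = ∑ j ∈ range m, tauZeta (P.vec (j + 1) ω) := by
  simp only [tauZeta_vec, Prod.ext_iff, Prod.fst_sum, Prod.snd_sum, Tn, Zn,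
    sum_Icc_one_eq_sum_range, and_self]

theorem measurable_Tn_Zn (m : ℕ) : Measurable fun ω => (Tn P m ω, Zn P m ω) := by
  simp only [Tn_Zn_eq_sum]
  exact Finset.measurable_sum _ fun j _ => measurable_tauZeta.comp (P.measurable_vec (j + 1))

theorem indepFun_Tn_Zn_vec (m : ℕ) :
    IndepFun (fun ω => (Tn P m ω, Zn P m ω)) (P.vec (m + 1)) ℙ := by
  have hindep : iIndepFun (fun k => P.vec (k + 1)) ℙ := P.indep
  have hφ : Measurable fun g : range m → ℕ × (ℕ → ℝ) => ∑ j, tauZeta (g j) :=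
    Finset.measurable_sum _ fun j _ => measurable_tauZeta.comp (measurable_pi_apply j)
  have hψ : Measurable fun g : ({m} : Finset ℕ) → ℕ × (ℕ → ℝ) => g ⟨m, mem_singleton_self m⟩ :=
    measurable_pi_apply _
  have h := (hindep.indepFun_finset (range m) {m} (by simp)
    fun k => P.measurable_vec (k + 1)).comp hφ hψ
  refine h.congr (Eventually.of_forall fun ω => ?_) (Eventually.of_forall fun ω => rfl)
  simp [Tn_Zn_eq_sum, sum_attach (range m) fun j => tauZeta (P.vec (j + 1) ω)]

theorem indepFun_Tn_Zn_star (m : ℕ) :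
    IndepFun (fun ω => (Tn P m ω, Zn P m ω)) (fun ω => (P.tauStar ω, P.zetaStar ω)) ℙ := by
  have hindep : IndepFun (fun ω => (P.tauStar ω, P.zetaStar ω)) (fun ω k => P.vec (k + 1) ω) ℙ :=
    P.star_indep
  have hsum : (fun ω => (Tn P m ω, Zn P m ω))
      = (fun g => ∑ j ∈ range m, tauZeta (g j)) ∘ fun ω k => P.vec (k + 1) ω :=
    funext (P.Tn_Zn_eq_sum m)
  rw [hsum]
  exact (hindep.comp measurable_id (Finset.measurable_sum _ fun j _ =>
    measurable_tauZeta.comp (measurable_pi_apply j))).symm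

theorem measure_lt_tau_u_mem {k : ℕ} (hk : 2 ≤ k) (i : ℕ) {s : Set ℝ} (hs : MeasurableSet s) :
    ℙ {ω | i < P.tauSeq k ω ∧ P.uSeq k i ω ∈ s}
      = ENNReal.ofReal (Q P) * ℙ {ω | P.tauStar ω = i ∧ P.zetaStar ω ∈ s} := by
  set T : Set (ℕ × (ℕ → ℝ)) := {v | i < v.1 ∧ v.2 i ∈ s}
  have hT : MeasurableSet T :=
    (measurable_fst (.of_discrete : MeasurableSet {j | i < j})).inter
      ((measurable_pi_apply i).comp measurable_snd hs)
  have hpre : ∀ k, {ω | i < P.tauSeq k ω ∧ P.uSeq k i ω ∈ s} = P.vec k ⁻¹' T := fun k => by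
    ext ω
    exact and_congr_right fun hi => by rw [P.vec_snd_of_le hi.le]
  rw [Q, P.star_dist i s hs]
  change _ = ℙ {ω | i < P.tauSeq 2 ω ∧ P.uSeq 2 i ω ∈ s}
  rw [hpre, hpre, ← Measure.map_apply (P.measurable_vec k) hT,
    ← Measure.map_apply (P.measurable_vec 2) hT]
  exact congrArg (· T) (P.ident k hk)

variable (n : ℕ) (s : Set ℝ)

theorem lhs_subset_nuP_preimage_Icc :
    {ω | ZP P n ω + P.uSeq (nuP P n ω + 1) (gamP P n ω) ω ∈ s ∧ P.tauSeq 1 ω ≤ n}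
      ⊆ nuP P n ⁻¹' ↑(Finset.Icc 1 n) := by
  rintro ω ⟨-, hτ⟩
  have := P.tau_pos 1 ω
  rw [Set.mem_preimage, coe_Icc]
  exact ⟨Nat.le_findGreatest (by omega) (by rwa [Tn_one]), Nat.findGreatest_le n⟩

theorem rhs_subset_nuPSt_preimage_Icc (hn : 1 ≤ n) :
    {ω | ZPSt P n ω ∈ s ∧ gamPSt P n ω = 0} ⊆ nuPSt P n ⁻¹' ↑(Finset.Icc 1 n) := by
  rintro ω ⟨-, hγ⟩
  rw [Set.mem_preimage, coe_Icc]
  refine ⟨Nat.pos_of_ne_zero fun h0 => ?_, Nat.findGreatest_le n⟩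
  have hT0 : TnSt P 0 ω = 0 := by simp [TnSt]
  rw [gamPSt, h0, hT0] at hγ
  omega

theorem lhs_inter_nuP_fiber {m : ℕ} (hm : 1 ≤ m) :
    {ω | ZP P n ω + P.uSeq (nuP P n ω + 1) (gamP P n ω) ω ∈ s ∧ P.tauSeq 1 ω ≤ n}
        ∩ nuP P n ⁻¹' {m}
      = {ω | Tn P m ω ≤ n ∧ n - Tn P m ω < P.tauSeq (m + 1) ω ∧
          Zn P m ω + P.uSeq (m + 1) (n - Tn P m ω) ω ∈ s} := by
  ext ω
  have hsucc := P.Tn_succ m ω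
  constructor
  · rintro ⟨⟨hs, -⟩, hν⟩
    obtain ⟨h1, h2⟩ := P.nuP_eq_iff.1 hν
    rw [ZP, gamP, hν] at hs
    exact ⟨h1, by omega, hs⟩
  · rintro ⟨h1, h2, hs⟩
    have hν : nuP P n ω = m := P.nuP_eq_iff.2 ⟨h1, by omega⟩
    have hτ : Tn P 1 ω ≤ Tn P m ω := (P.strictMono_Tn ω).monotone hm
    rw [Tn_one] at hτ
    exact ⟨⟨by rwa [ZP, gamP, hν], by omega⟩, hν⟩

theorem rhs_inter_nuPSt_fiber {m : ℕ} (hm : 1 ≤ m) :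
    {ω | ZPSt P n ω ∈ s ∧ gamPSt P n ω = 0} ∩ nuPSt P n ⁻¹' {m}
      = {ω | Tn P m ω ≤ n ∧ P.tauStar ω = n - Tn P m ω ∧ Zn P m ω + P.zetaStar ω ∈ s} := by
  ext ω
  have hT := P.TnSt_eq_add hm ω
  have hsucc : TnSt P m ω < TnSt P (m + 1) ω := P.strictMono_TnSt ω (Nat.lt_succ_self m)
  constructor
  · rintro ⟨⟨hs, hγ⟩, hν⟩
    obtain ⟨h1, -⟩ := P.nuPSt_eq_iff.1 hν
    rw [gamPSt, hν] at hγ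
    rw [ZPSt, hν, P.ZnSt_eq_add hm] at hs
    exact ⟨by omega, by omega, hs⟩
  · rintro ⟨h1, h2, hs⟩
    have hν : nuPSt P n ω = m := P.nuPSt_eq_iff.2 ⟨by omega, by omega⟩
    exact ⟨⟨by rwa [ZPSt, hν, P.ZnSt_eq_add hm], by rw [gamPSt, hν]; omega⟩, hν⟩

theorem measure_lhs_fiber_eq [IsProbabilityMeasure (ℙ : Measure Ω)] {m : ℕ} (hm : 1 ≤ m)
    (hs : MeasurableSet s) :
    ℙ {ω | Tn P m ω ≤ n ∧ n - Tn P m ω < P.tauSeq (m + 1) ω ∧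
        Zn P m ω + P.uSeq (m + 1) (n - Tn P m ω) ω ∈ s}
      = ENNReal.ofReal (Q P) *
        ℙ {ω | Tn P m ω ≤ n ∧ P.tauStar ω = n - Tn P m ω ∧ Zn P m ω + P.zetaStar ω ∈ s} := by
  set S : Set ((ℕ × ℝ) × (ℕ × (ℕ → ℝ))) :=
    {p | p.1.1 ≤ n ∧ n - p.1.1 < p.2.1 ∧ p.1.2 + p.2.2 (n - p.1.1) ∈ s}
  set S' : Set ((ℕ × ℝ) × (ℕ × ℝ)) := {p | p.1.1 ≤ n ∧ p.2.1 = n - p.1.1 ∧ p.1.2 + p.2.2 ∈ s}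
  have hS : MeasurableSet S := by
    -- the evaluation at the random index `n - p.1.1` is beyond `measurability`
    have hidx : Measurable fun p : (ℕ × ℝ) × (ℕ × (ℕ → ℝ)) => p.2.2 (n - p.1.1) :=
      measurable_apply_fst.comp ((measurable_from_nat.comp measurable_fst.fst).prodMk
        measurable_snd.snd)
    measurability
  have hS' : MeasurableSet S' := by measurability
  have hsection : ∀ a : ℕ × ℝ, ℙ {ω | (a, P.vec (m + 1) ω) ∈ S}
      = ENNReal.ofReal (Q P) * ℙ {ω | (a, (P.tauStar ω, P.zetaStar ω)) ∈ S'} := by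
    rintro ⟨t, z⟩
    by_cases ht : t ≤ n
    · convert P.measure_lt_tau_u_mem (k := m + 1) (by omega) (n - t)
        (measurable_const_add z hs) using 2
      · ext ω
        simp only [S, Set.mem_ofPred_eq, Set.mem_preimage, ht, true_and]
        exact and_congr_right fun hlt => by rw [P.vec_snd_of_le hlt.le]
      · simp [S', ht]
    · simp [S, S', ht]
  have hlhs : {ω | Tn P m ω ≤ n ∧ n - Tn P m ω < P.tauSeq (m + 1) ω ∧
      Zn P m ω + P.uSeq (m + 1) (n - Tn P m ω) ω ∈ s}
        = {ω | ((Tn P m ω, Zn P m ω), P.vec (m + 1) ω) ∈ S} := by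
    ext ω
    exact and_congr_right fun _ => and_congr_right fun hlt => by rw [P.vec_snd_of_le hlt.le]
  rw [hlhs]
  exact measure_prodMk_mem_eq_const_mul_of_indepFun (P.measurable_Tn_Zn m)
    (P.measurable_vec (m + 1)) P.measurable_star (P.indepFun_Tn_Zn_vec m)
    (P.indepFun_Tn_Zn_star m) hS hS' _ hsection

end CRP

theorem change_of_measure_identity_general {Ω : Type} [MeasureSpace Ω]
    [IsProbabilityMeasure (ℙ : Measure Ω)]
    (P : CRP Ω) (n : ℕ) (hn : 2 ≤ n) (x : ℝ) (Δ : ℝ) :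
    ℙ {ω | (ZP P n ω + P.uSeq (nuP P n ω + 1) (gamP P n ω) ω ∈ Set.Ico x (x + Δ)) ∧
        P.tauSeq 1 ω ≤ n}
      = ENNReal.ofReal (Q P) *
        ℙ {ω | ZPSt P n ω ∈ Set.Ico x (x + Δ) ∧ gamPSt P n ω = 0} := by
  rw [measure_eq_sum_inter_fiber (Icc 1 n) (P.lhs_subset_nuP_preimage_Icc n _)
      fun m _ => P.measurableSet_nuP_fiber n m,
    measure_eq_sum_inter_fiber (Icc 1 n) (P.rhs_subset_nuPSt_preimage_Icc n _ (by omega))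
      fun m _ => P.measurableSet_nuPSt_fiber n m, mul_sum]
  refine sum_congr rfl fun m hm => ?_
  have hm1 : 1 ≤ m := (Finset.mem_Icc.1 hm).1
  rw [P.lhs_inter_nuP_fiber n _ hm1, P.rhs_inter_nuPSt_fiber n _ hm1,
    P.measure_lhs_fiber_eq n _ hm1 measurableSet_Ico]

/-- **Lemma 7 (the change-of-measure identity, non-lattice form).** Under conditions
`S_I`–`S_IV`, for every `n ≥ 2`, every real `x ≥ c₁` and every `Δ > 0`,
`P(Z₊(n) + u_{ν₊(n)+1, γ₊(n)} ∈ [x, x + Δ), τ₁ ≤ n)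
  = Q · P(Z*₊(n) ∈ [x, x + Δ), γ*₊(n) = 0)`. -/
theorem change_of_measure_identity {Ω : Type} [MeasureSpace Ω]
    [IsProbabilityMeasure (ℙ : Measure Ω)]
    (P : CRP Ω) (n : ℕ) (hn : 2 ≤ n) (x : ℝ) (hx : P.c₁ ≤ x) (Δ : ℝ) (hΔ : 0 < Δ) :
    ℙ {ω | (ZP P n ω + P.uSeq (nuP P n ω + 1) (gamP P n ω) ω ∈ Set.Ico x (x + Δ)) ∧
        P.tauSeq 1 ω ≤ n}
      = ENNReal.ofReal (Q P) *
        ℙ {ω | ZPSt P n ω ∈ Set.Ico x (x + Δ) ∧ gamPSt P n ω = 0} :=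
  change_of_measure_identity_general P n hn x Δ
end CompoundRenewal
end
end

section
/- Let {X_i}_{i≥1} be a sequence of independent and identically distributed non-negative random variables, set S_n = Σ_{i=1}^n X_i (with S₀ = 0), and let N be an ℕ-valued (counting) random variable defined on the same probability space (no independence between N and {X_i} is assumed). If for some C > 0 one has E e^{C X₁} < ∞ and E e^{C N} < ∞, then there exists a constant b > 0 such that E e^{b S_N} < ∞. -/
open MeasureTheory ProbabilityTheory Filter Real
open scoped ENNReal Topology

/-!
By AM-GM, `e^{b S_N} ≤ e^{2b S_N - C N} + e^{C N}`, and `e^{2b S_N - C N}` is dominated by the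
series `∑ₙ e^{2b Sₙ - C n}`, whose expectation is `∑ₙ (M(2b) e^{-C})ⁿ` by independence, `M` being
the moment generating function of `X₁`. Convexity of `exp` gives `M(θ C) ≤ 1 - θ + θ M(C)`, so
`M(2b) < e^C` for small `b > 0` and the series is geometric with ratio `< 1`.
-/

theorem Real.exp_half_le_exp_sub_add_exp (a c : ℝ) : exp (a / 2) ≤ exp (a - c) + exp c := by
  have hu := exp_pos ((a - c) / 2)
  have hv := exp_pos (c / 2)
  calc exp (a / 2) = exp ((a - c) / 2) * exp (c / 2) := by rw [← exp_add]; ring_nf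
    _ ≤ exp ((a - c) / 2) ^ 2 + exp (c / 2) ^ 2 := by
      nlinarith [two_mul_le_add_sq (exp ((a - c) / 2)) (exp (c / 2))]
    _ = exp (a - c) + exp c := by rw [← exp_nat_mul, ← exp_nat_mul]; push_cast; ring_nf

theorem Real.exp_mul_le_one_sub_add_mul_exp {θ : ℝ} (h0 : 0 ≤ θ) (h1 : θ ≤ 1) (y : ℝ) :
    exp (θ * y) ≤ 1 - θ + θ * exp y := by
  simpa [add_comm] using
    convexOn_exp.2 (Set.mem_univ y) (Set.mem_univ 0) h0 (sub_nonneg.2 h1) (by ring)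

theorem Finset.sum_Icc_one_eq_sum_range {M : Type*} [AddCommMonoid M] (f : ℕ → M) (n : ℕ) :
    ∑ i ∈ Icc 1 n, f i = ∑ i ∈ range n, f (i + 1) := by
  rw [range_eq_Ico, sum_Ico_add', ← Ico_add_one_right_eq_Icc]

section

variable {Ω : Type*} [MeasurableSpace Ω] {μ : Measure Ω} [IsProbabilityMeasure μ]

theorem lintegral_exp_mul_le {X : Ω → ℝ} (hX : Measurable X) {θ : ℝ} (h0 : 0 ≤ θ) (h1 : θ ≤ 1)
    (C : ℝ) :
    ∫⁻ ω, .ofReal (exp (θ * C * X ω)) ∂μ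
      ≤ .ofReal (1 - θ) + .ofReal θ * ∫⁻ ω, .ofReal (exp (C * X ω)) ∂μ := by
  calc ∫⁻ ω, .ofReal (exp (θ * C * X ω)) ∂μ
      ≤ ∫⁻ ω, .ofReal (1 - θ) + .ofReal θ * .ofReal (exp (C * X ω)) ∂μ := by
        refine lintegral_mono fun ω => ?_
        rw [← ENNReal.ofReal_mul h0, ← ENNReal.ofReal_add (sub_nonneg.2 h1) (by positivity),
          mul_assoc]
        exact ENNReal.ofReal_le_ofReal (exp_mul_le_one_sub_add_mul_exp h0 h1 _)
    _ = .ofReal (1 - θ) + .ofReal θ * ∫⁻ ω, .ofReal (exp (C * X ω)) ∂μ := by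
        rw [lintegral_add_left measurable_const, lintegral_const, measure_univ, mul_one,
          lintegral_const_mul _ (by fun_prop)]

theorem exists_pos_lintegral_exp_mul_lt {X : Ω → ℝ} (hX : Measurable X) {C : ℝ} (hC : 0 < C)
    (hX_exp : ∫⁻ ω, .ofReal (exp (C * X ω)) ∂μ < ⊤) {c : ℝ} (hc : 1 < c) :
    ∃ t, 0 < t ∧ ∫⁻ ω, .ofReal (exp (t * X ω)) ∂μ < .ofReal c := by
  set K := (∫⁻ ω, .ofReal (exp (C * X ω)) ∂μ).toReal
  have hlim : Tendsto (fun θ : ℝ => 1 - θ + θ * K) (𝓝 0) (𝓝 1) := by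
    simpa using (by fun_prop : Continuous fun θ : ℝ => 1 - θ + θ * K).tendsto 0
  obtain ⟨θ, ⟨hθc, hθ1⟩, hθ0⟩ := (eventually_nhdsWithin_of_eventually_nhds
    ((hlim.eventually_lt_const hc).and (eventually_lt_nhds one_pos)) |>.and
    (self_mem_nhdsWithin : ∀ᶠ θ in 𝓝[>] (0 : ℝ), 0 < θ)).exists
  refine ⟨θ * C, mul_pos hθ0 hC, (lintegral_exp_mul_le hX hθ0.le hθ1.le C).trans_lt ?_⟩
  rwa [← ENNReal.ofReal_toReal hX_exp.ne, ← ENNReal.ofReal_mul hθ0.le,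
    ← ENNReal.ofReal_add (sub_nonneg.2 hθ1.le) (by positivity), ENNReal.ofReal_lt_ofReal_iff
    (by linarith)]

end

theorem ProbabilityTheory.iIndepFun.lintegral_exp_mul_sum {Ω ι : Type*} [MeasurableSpace Ω]
    {μ : Measure Ω} {Y : ι → Ω → ℝ} (hY : ∀ i, Measurable (Y i)) (hInd : iIndepFun Y μ) (t : ℝ)
    (s : Finset ι) :
    ∫⁻ ω, .ofReal (exp (t * ∑ i ∈ s, Y i ω)) ∂μ = ∏ i ∈ s, ∫⁻ ω, .ofReal (exp (t * Y i ω)) ∂μ := by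
  have hφ : Measurable fun x : ℝ => ENNReal.ofReal (exp (t * x)) := by fun_prop
  have h := lintegral_prod_eq_prod_lintegral_of_indepFun s _ (hInd.comp _ fun _ => hφ)
    fun i => hφ.comp (hY i)
  simp only [Function.comp_apply] at h
  rw [← h]
  congr with ω
  rw [Finset.mul_sum, exp_sum, ENNReal.ofReal_prod_of_nonneg fun _ _ => (exp_pos _).le]

theorem lintegral_tsum_exp_mul_sum_range_sub_lt_top {Ω : Type*} [MeasurableSpace Ω]
    {μ : Measure Ω} {Y : ℕ → Ω → ℝ} (hY : ∀ i, Measurable (Y i)) (hInd : iIndepFun Y μ)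
    (hident : ∀ i, IdentDistrib (Y i) (Y 0) μ μ) {t C : ℝ}
    (hM : ∫⁻ ω, .ofReal (exp (t * Y 0 ω)) ∂μ < .ofReal (exp C)) :
    ∫⁻ ω, ∑' n : ℕ, .ofReal (exp (t * ∑ i ∈ Finset.range n, Y i ω - C * n)) ∂μ < ⊤ := by
  set M := ∫⁻ ω, .ofReal (exp (t * Y 0 ω)) ∂μ
  have hφ : Measurable fun x : ℝ => ENNReal.ofReal (exp (t * x)) := by fun_prop
  have hM_eq (i : ℕ) : ∫⁻ ω, .ofReal (exp (t * Y i ω)) ∂μ = M :=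
    ((hident i).comp hφ).lintegral_eq
  have hterm (n : ℕ) : ∫⁻ ω, .ofReal (exp (t * ∑ i ∈ Finset.range n, Y i ω - C * n)) ∂μ
      = (M * .ofReal (exp (-C))) ^ n := by
    calc _ = ∫⁻ ω, .ofReal (exp (t * ∑ i ∈ Finset.range n, Y i ω)) * .ofReal (exp (-C)) ^ n ∂μ := by
          refine lintegral_congr fun ω => ?_
          rw [← ENNReal.ofReal_pow (exp_pos _).le, ← ENNReal.ofReal_mul (exp_pos _).le,
            ← exp_nat_mul, ← exp_add]
          ring_nf
      _ = M ^ n * .ofReal (exp (-C)) ^ n := by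
          rw [lintegral_mul_const' _ _ (by finiteness), hInd.lintegral_exp_mul_sum hY,
            Finset.prod_congr rfl fun i _ => hM_eq i,
            Finset.prod_const, Finset.card_range]
      _ = _ := (mul_pow _ _ _).symm
  have hratio : M * .ofReal (exp (-C)) < 1 := by
    calc M * .ofReal (exp (-C)) < .ofReal (exp C) * .ofReal (exp (-C)) :=
          ENNReal.mul_lt_mul_left (by simp [exp_pos]) ENNReal.ofReal_ne_top hM
      _ = 1 := by rw [← ENNReal.ofReal_mul (exp_pos _).le, ← exp_add, add_neg_cancel, exp_zero,
          ENNReal.ofReal_one]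
  rwa [lintegral_tsum fun n => by fun_prop, tsum_congr hterm, ENNReal.tsum_geometric,
    ENNReal.inv_lt_top, tsub_pos_iff_lt]

theorem exp_moment_random_sum_general {Ω : Type} [MeasureSpace Ω]
    [IsProbabilityMeasure (ℙ : Measure Ω)]
    (X : ℕ → Ω → ℝ) (N : Ω → ℕ)
    (hX_meas : ∀ i, Measurable (X i))
    (hX_indep : iIndepFun (fun i : ℕ => X (i + 1)) ℙ)
    (hX_ident : ∀ i : ℕ, 1 ≤ i → Measure.map (X i) ℙ = Measure.map (X 1) ℙ)
    (C : ℝ) (hC : 0 < C)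
    (hX_exp : ∫⁻ ω, ENNReal.ofReal (Real.exp (C * X 1 ω)) ∂ℙ < ⊤)
    (hN_exp : ∫⁻ ω, ENNReal.ofReal (Real.exp (C * (N ω : ℝ))) ∂ℙ < ⊤) :
    ∃ b : ℝ, 0 < b ∧
      ∫⁻ ω, ENNReal.ofReal
        (Real.exp (b * ∑ i ∈ Finset.Icc 1 (N ω), X i ω)) ∂ℙ < ⊤ := by
  obtain ⟨t, ht, hM⟩ := exists_pos_lintegral_exp_mul_lt (hX_meas 1) hC hX_exp (one_lt_exp_iff.2 hC)
  have hident (i : ℕ) : IdentDistrib (X (i + 1)) (X 1) ℙ ℙ :=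
    ⟨(hX_meas _).aemeasurable, (hX_meas 1).aemeasurable, hX_ident (i + 1) (Nat.le_add_left 1 i)⟩
  have hbound (ω : Ω) : ENNReal.ofReal (exp (t / 2 * ∑ i ∈ Finset.Icc 1 (N ω), X i ω))
      ≤ ∑' n : ℕ, .ofReal (exp (t * ∑ i ∈ Finset.range n, X (i + 1) ω - C * n))
        + .ofReal (exp (C * N ω)) := by
    rw [Finset.sum_Icc_one_eq_sum_range, div_mul_eq_mul_div]
    calc _ ≤ ENNReal.ofReal (exp (t * ∑ i ∈ Finset.range (N ω), X (i + 1) ω - C * N ω)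
            + exp (C * N ω)) :=
          ENNReal.ofReal_le_ofReal (exp_half_le_exp_sub_add_exp _ _)
      _ = _ := ENNReal.ofReal_add (exp_pos _).le (exp_pos _).le
      _ ≤ _ := add_le_add_left (ENNReal.le_tsum (N ω)) _
  refine ⟨t / 2, half_pos ht, (lintegral_mono hbound).trans_lt ?_⟩
  rw [lintegral_add_left (by fun_prop)]
  exact ENNReal.add_lt_top.2 ⟨lintegral_tsum_exp_mul_sum_range_sub_lt_top
    (fun i => hX_meas (i + 1)) hX_indep hident hM, hN_exp⟩

/-- **Lemma 9 (auxiliary).** Let `{X_i}_{i ≥ 1}` be i.i.d. non-negative random variables,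
`S_n = X_1 + ⋯ + X_n` (with `S_0 = 0`), and let `N` be an `ℕ`-valued random variable on the
same probability space (no independence between `N` and `{X_i}` is assumed).  If
`E exp (C X₁) < ∞` and `E exp (C N) < ∞` for some `C > 0`, then there exists `b > 0` with
`E exp (b S_N) < ∞`. -/
theorem exp_moment_random_sum {Ω : Type} [MeasureSpace Ω]
    [IsProbabilityMeasure (ℙ : Measure Ω)]
    (X : ℕ → Ω → ℝ) (N : Ω → ℕ)
    (hX_meas : ∀ i, Measurable (X i)) (hN_meas : Measurable N)
    (hX_nonneg : ∀ i ω, 0 ≤ X i ω)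
    (hX_indep : iIndepFun (fun i : ℕ => X (i + 1)) ℙ)
    (hX_ident : ∀ i : ℕ, 1 ≤ i → Measure.map (X i) ℙ = Measure.map (X 1) ℙ)
    (C : ℝ) (hC : 0 < C)
    (hX_exp : ∫⁻ ω, ENNReal.ofReal (Real.exp (C * X 1 ω)) ∂ℙ < ⊤)
    (hN_exp : ∫⁻ ω, ENNReal.ofReal (Real.exp (C * (N ω : ℝ))) ∂ℙ < ⊤) :
    ∃ b : ℝ, 0 < b ∧
      ∫⁻ ω, ENNReal.ofReal
        (Real.exp (b * ∑ i ∈ Finset.Icc 1 (N ω), X i ω)) ∂ℙ < ⊤ :=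
  exp_moment_random_sum_general X N hX_meas hX_indep hX_ident C hC hX_exp hN_exp
end

section
/- Under the standing assumptions and the admissibility condition γ⁺·ess inf v⁺ < c₂ ≤ c₁ < γ⁺·V on the constants c₁ ≥ c₂ > 0, the following decomposition holds almost surely: for all integers n ≥ 0 and m ≥ 0, if Γ_m ≤ n, then w_{0,n} = w_{0,Γ₀} + w_{Γ₀,Γ₁} + ⋯ + w_{Γ_{m−1},Γ_m} + w_{Γ_m,n} (with the convention w_{j,j} = 0). -/
open MeasureTheory ProbabilityTheory Filter Real Set
open scoped ENNReal Topology

noncomputable section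

namespace MaxPathWeight

def IsPath (j k : ℤ) (p : List ℤ) : Prop :=
  p.Chain' (· < ·) ∧ p.head? = some j ∧ p.getLast? = some k

def edges (p : List ℤ) : List (ℤ × ℤ) := p.zip p.tail

structure EdgeData (Ω : Type) [MeasureSpace Ω] where
  v : ℤ → ℤ → Ω → EReal
  v_meas : ∀ j k, Measurable (v j k)
  v_ne_top : ∀ j k ω, v j k ω ≠ ⊤
  v_indep : iIndepFun
    (fun e : {e : ℤ × ℤ // e.1 < e.2} => v e.1.1 e.1.2) ℙ
  v_ident : ∀ j k : ℤ, j < k → Measure.map (v j k) ℙ = Measure.map (v 0 1) ℙ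
  vp : ℤ → ℤ → Ω → ℝ
  vp_meas : ∀ j k, Measurable (vp j k)
  vp_pos : ∀ j k ω, 0 < vp j k ω
  vp_couple : ∀ j k ω, 0 < v j k ω → (vp j k ω : EReal) = v j k ω
  vp_indep : iIndepFun
    (fun e : {e : ℤ × ℤ // e.1 < e.2} => vp e.1.1 e.1.2) ℙ
  vp_dist : ∀ j k : ℤ, j < k → ∀ s : Set ℝ, MeasurableSet s →
    ℙ {ω | vp j k ω ∈ s} * ℙ {ω | 0 < v 0 1 ω}
      = ℙ {ω | 0 < v 0 1 ω ∧ (v 0 1 ω).toReal ∈ s}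
  pos_prob : 0 < ℙ {ω | 0 < v 0 1 ω}
  nondeg : ∀ c : ℝ, 0 < c → ℙ {ω | vp 0 1 ω = c} < 1
  exp_moment : ∃ C : ℝ, 0 < C ∧
    ∫⁻ ω, ENNReal.ofReal (Real.exp (C * vp 0 1 ω)) ∂ℙ < ⊤

variable {Ω : Type} [MeasureSpace Ω]

def pathWeight (M : EdgeData Ω) (p : List ℤ) (ω : Ω) : EReal :=
  ((edges p).map fun e => M.v e.1 e.2 ω).sum

def posOnPath (M : EdgeData Ω) (p : List ℤ) (ω : Ω) : Prop :=
  ∀ e ∈ edges p, 0 < M.v e.1 e.2 ω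

def w (M : EdgeData Ω) (j k : ℤ) (ω : Ω) : EReal :=
  if j = k then 0 else sSup {x | ∃ p, IsPath j k p ∧ pathWeight M p ω = x}

def wp (M : EdgeData Ω) (j k : ℤ) (ω : Ω) : EReal :=
  sSup {x | ∃ p, IsPath j k p ∧ posOnPath M p ω ∧ pathWeight M p ω = x}

def IsSkeletonPlus (M : EdgeData Ω) (x : ℤ) (ω : Ω) : Prop :=
  ∀ j k : ℤ, j < x → x < k →
    (∃ p, IsPath j x p ∧ posOnPath M p ω) ∧ (∃ p, IsPath x k p ∧ posOnPath M p ω)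

def Ar (M : EdgeData Ω) (c : ℝ) (x : ℤ) (ω : Ω) : Prop :=
  ∀ i : ℕ, 1 ≤ i → ((c * i : ℝ) : EReal) ≤ w M x (x + i) ω

def Al (M : EdgeData Ω) (c : ℝ) (x : ℤ) (ω : Ω) : Prop :=
  ∀ j : ℕ, 1 ≤ j → ((c * j : ℝ) : EReal) ≤ w M (x - j) x ω

def A0 (M : EdgeData Ω) (c : ℝ) (x : ℤ) (ω : Ω) : Prop :=
  ∀ i j : ℕ, 1 ≤ i → 1 ≤ j → M.v (x - j) (x + i) ω < ((c * (i + j) : ℝ) : EReal)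

def ArP (M : EdgeData Ω) (c : ℝ) (x : ℤ) (ω : Ω) : Prop :=
  ∀ i : ℕ, 1 ≤ i → ((c * i : ℝ) : EReal) ≤ wp M x (x + i) ω

def AlP (M : EdgeData Ω) (c : ℝ) (x : ℤ) (ω : Ω) : Prop :=
  ∀ j : ℕ, 1 ≤ j → ((c * j : ℝ) : EReal) ≤ wp M (x - j) x ω

def IsRenewal (M : EdgeData Ω) (c₁ c₂ : ℝ) (x : ℤ) (ω : Ω) : Prop :=
  Al M c₁ x ω ∧ A0 M c₂ x ω ∧ Ar M c₁ x ω

def IsRenewalPlus (M : EdgeData Ω) (c₁ c₂ : ℝ) (x : ℤ) (ω : Ω) : Prop :=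
  AlP M c₁ x ω ∧ A0 M c₂ x ω ∧ ArP M c₁ x ω

/-- The edge model together with a measurable enumeration `tp` of the (a.s. infinite) set of
skeleton-plus vertices: `⋯ < t⁺₋₁ < 0 ≤ t⁺₀ < t⁺₁ < ⋯`. -/
structure EdgeModel (Ω : Type) [MeasureSpace Ω] extends EdgeData Ω where
  tp : ℤ → Ω → ℤ
  tp_meas : ∀ k, Measurable (tp k)
  tp_spec : ∀ᵐ ω ∂ℙ, StrictMono (fun k => tp k ω) ∧ tp (-1) ω < 0 ∧ 0 ≤ tp 0 ω ∧
    (∀ k : ℤ, IsSkeletonPlus toEdgeData (tp k ω) ω) ∧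
    (∀ x : ℤ, IsSkeletonPlus toEdgeData x ω → ∃ k, tp k ω = x)

/-- `γ⁺ = 1 / E (t⁺₁ - t⁺₀)`. -/
def gammaP (M : EdgeModel Ω) : ℝ := (∫ ω, ((M.tp 1 ω - M.tp 0 ω : ℤ) : ℝ) ∂ℙ)⁻¹

/-- `V = E min { v⁺_{i j} : t⁺₀ ≤ i < j ≤ t⁺₁ }`. -/
def Vconst (M : EdgeModel Ω) : ℝ :=
  ∫ ω, sInf {r : ℝ | ∃ i j : ℤ, M.tp 0 ω ≤ i ∧ i < j ∧ j ≤ M.tp 1 ω ∧ M.vp i j ω = r} ∂ℙ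

/-- `ess inf v⁺ = inf {t > 0 : P(v⁺ < t) > 0}`. -/
def essInfVP (M : EdgeModel Ω) : ℝ :=
  sInf {t : ℝ | 0 < t ∧ 0 < ℙ {ω | M.vp 0 1 ω < t}}

/-- Admissibility of the constants `c₁ ≥ c₂ > 0`:
`γ⁺ · ess inf v⁺ < c₂ ≤ c₁ < γ⁺ · V`. -/
def Admissible (M : EdgeModel Ω) (c₁ c₂ : ℝ) : Prop :=
  0 < c₂ ∧ c₂ ≤ c₁ ∧ gammaP M * essInfVP M < c₂ ∧ c₁ < gammaP M * Vconst M

/-- The full renewal setting: the edge model, admissible constants `c₁ ≥ c₂ > 0`, and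
measurable enumerations `Γ` of the renewal vertices and `Γp` of the renewal-plus vertices. -/
structure RenewalSetting (Ω : Type) [MeasureSpace Ω] extends EdgeModel Ω where
  c₁ : ℝ
  c₂ : ℝ
  adm : Admissible toEdgeModel c₁ c₂
  Γ : ℤ → Ω → ℤ
  Γ_meas : ∀ k, Measurable (Γ k)
  Γ_spec : ∀ᵐ ω ∂ℙ, StrictMono (fun k => Γ k ω) ∧ Γ (-1) ω < 0 ∧ 0 ≤ Γ 0 ω ∧
    (∀ k : ℤ, IsRenewal toEdgeData c₁ c₂ (Γ k ω) ω) ∧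
    (∀ x : ℤ, IsRenewal toEdgeData c₁ c₂ x ω → ∃ k, Γ k ω = x)
  Γp : ℤ → Ω → ℤ
  Γp_meas : ∀ k, Measurable (Γp k)
  Γp_spec : ∀ᵐ ω ∂ℙ, StrictMono (fun k => Γp k ω) ∧ Γp (-1) ω < 0 ∧ 0 ≤ Γp 0 ω ∧
    (∀ k : ℤ, IsRenewalPlus toEdgeData c₁ c₂ (Γp k ω) ω) ∧
    (∀ x : ℤ, IsRenewalPlus toEdgeData c₁ c₂ x ω → ∃ k, Γp k ω = x)

/-- `τ = Γ₁ - Γ₀`, a representative of the common cycle-length distribution. -/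
def tau (S : RenewalSetting Ω) (ω : Ω) : ℤ := S.Γ 1 ω - S.Γ 0 ω

/-- `ζ = w_{Γ₀, Γ₁}`, a representative of the common cycle-weight distribution. -/
def zeta (S : RenewalSetting Ω) (ω : Ω) : ℝ :=
  (w S.toEdgeData (S.Γ 0 ω) (S.Γ 1 ω) ω).toReal

/-- `A(λ, μ) = ln E exp (λ τ + μ ζ)`. -/
def Afun (S : RenewalSetting Ω) (l m : ℝ) : ℝ :=
  Real.log (∫ ω, Real.exp (l * (tau S ω : ℝ) + m * zeta S ω) ∂ℙ)

/-- The rate function `D(α) = sup {λ + μ α : A(λ, μ) ≤ 0}`. -/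
def Dfun (S : RenewalSetting Ω) (α : ℝ) : ℝ :=
  sSup {x : ℝ | ∃ l m : ℝ, Afun S l m ≤ 0 ∧ x = l + m * α}

/-- `a = E ζ / E τ`. -/
def aC (S : RenewalSetting Ω) : ℝ :=
  (∫ ω, zeta S ω ∂ℙ) / (∫ ω, (tau S ω : ℝ) ∂ℙ)

/-- `σ² = E (ζ - a τ)² / E τ`. -/
def sigmaSq (S : RenewalSetting Ω) : ℝ :=
  (∫ ω, (zeta S ω - aC S * (tau S ω : ℝ)) ^ 2 ∂ℙ) / (∫ ω, (tau S ω : ℝ) ∂ℙ)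

/-- `σ`. -/
def sigmaC (S : RenewalSetting Ω) : ℝ := Real.sqrt (sigmaSq S)

/-- Condition `[Z]` : `v` is integer-valued, and the gcd of `{k ≥ 1 : P(v = k) > 0}` is `1`. -/
def CondZ (M : EdgeData Ω) : Prop :=
  ℙ {ω | M.v 0 1 ω = ⊥ ∨ ∃ m : ℤ, M.v 0 1 ω = ((m : ℝ) : EReal)} = 1 ∧
  ∀ d : ℕ, (∀ k : ℕ, 1 ≤ k → 0 < ℙ {ω | M.v 0 1 ω = ((k : ℝ) : EReal)} → d ∣ k) → d = 1

/-- Condition `[R]` : the distribution of `v` is non-lattice. -/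
def CondR (M : EdgeData Ω) : Prop :=
  ∀ a h : ℝ, 0 < h → (∑' s : ℤ, ℙ {ω | M.v 0 1 ω = ((a + s * h : ℝ) : EReal)}) < 1

/-!
A renewal vertex `x` can be inserted into every path from `j < x` to `k > x` without loss.
A path through `x` splits there. A path avoiding `x` jumps over it by one edge
`(x - j, x + i)`, whose weight is below `c₂ (i + j)` by `A⁰`, while by `Aˡ` and `Aʳ` the detour
`x - j → x → x + i` weighs at least `c₁ j + c₁ i ≥ c₂ (i + j)`. Hence `w` is additive at
renewal vertices, and the decomposition follows by induction along `Γ₀ ≤ Γ₁ ≤ ⋯ ≤ Γ_m`.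
-/

lemma edges_append_of_getLast? {l₁ : List ℤ} {x : ℤ} (h : l₁.getLast? = some x)
    (l₂ : List ℤ) : edges (l₁ ++ l₂) = edges l₁ ++ edges (x :: l₂) := by
  induction l₁ with
  | nil => simp at h
  | cons a t ih =>
    cases t with
    | nil => simp only [List.getLast?_singleton, Option.some.injEq] at h; subst h; rfl
    | cons b t' =>
      rw [List.getLast?_cons_cons] at h
      exact congrArg ((a, b) :: ·) (ih h)

lemma isPath_singleton (j : ℤ) : IsPath j j [j] := ⟨List.isChain_singleton j, rfl, rfl⟩

lemma isPath_cons_cons {a b k : ℤ} {t : List ℤ} :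
    IsPath a k (a :: b :: t) ↔ a < b ∧ IsPath b k (b :: t) := by
  simp only [IsPath, List.head?_cons, List.getLast?_cons_cons, true_and]
  rw [← and_assoc]
  exact and_congr_left' List.isChain_cons_cons

namespace IsPath

variable {j k : ℤ} {p : List ℤ}

lemma eq_cons (hp : IsPath j k p) : ∃ t, p = j :: t := by
  obtain ⟨-, hhead, -⟩ := hp
  cases p with
  | nil => simp at hhead
  | cons a t => exact ⟨t, by simpa using hhead⟩

lemma le (hp : IsPath j k p) : j ≤ k := by
  obtain ⟨t, rfl⟩ := hp.eq_cons
  induction t generalizing j with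
  | nil => exact (by simpa using hp.2.2 : j = k).le
  | cons b t ih =>
    obtain ⟨hjb, hb⟩ := isPath_cons_cons.mp hp
    exact hjb.le.trans (ih hb)

lemma append {x : ℤ} {q : List ℤ} (hp : IsPath j x p) (hq : IsPath x k q) :
    IsPath j k (p ++ q.tail) ∧ edges (p ++ q.tail) = edges p ++ edges q := by
  obtain ⟨t, rfl⟩ := hp.eq_cons
  obtain ⟨s, rfl⟩ := hq.eq_cons
  refine ⟨?_, edges_append_of_getLast? hp.2.2 s⟩
  induction t generalizing j with
  | nil =>
    obtain rfl : j = x := by simpa using hp.2.2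
    exact hq
  | cons b t ih =>
    obtain ⟨hjb, hb⟩ := isPath_cons_cons.mp hp
    exact isPath_cons_cons.mpr ⟨hjb, ih hb⟩

lemma split_of_mem {x : ℤ} (hp : IsPath j k p) (hx : x ∈ p) :
    ∃ p₁ p₂, IsPath j x p₁ ∧ IsPath x k p₂ ∧ edges p = edges p₁ ++ edges p₂ := by
  obtain ⟨t, rfl⟩ := hp.eq_cons
  induction t generalizing j with
  | nil =>
    obtain rfl : x = j := by simpa using hx
    exact ⟨[x], [x], isPath_singleton x, hp, rfl⟩
  | cons b t ih =>
    rcases List.mem_cons.mp hx with rfl | hx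
    · exact ⟨[x], _, isPath_singleton x, hp, rfl⟩
    obtain ⟨hjb, hb⟩ := isPath_cons_cons.mp hp
    obtain ⟨p₁, p₂, hp₁, hp₂, hedges⟩ := ih hb hx
    obtain ⟨s, rfl⟩ := hp₁.eq_cons
    exact ⟨j :: b :: s, p₂, isPath_cons_cons.mpr ⟨hjb, hp₁⟩, hp₂,
      congrArg ((j, b) :: ·) hedges⟩

lemma exists_edge_over {x : ℤ} (hp : IsPath j k p) (hj : j < x) (hk : x < k) (hx : x ∉ p) :
    ∃ a b p₁ p₂, a < x ∧ x < b ∧ IsPath j a p₁ ∧ IsPath b k p₂ ∧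
      edges p = edges p₁ ++ (a, b) :: edges p₂ := by
  obtain ⟨t, rfl⟩ := hp.eq_cons
  induction t generalizing j with
  | nil => exact absurd (by simpa using hp.2.2 : j = k) (hj.trans hk).ne
  | cons b t ih =>
    obtain ⟨hjb, hb⟩ := isPath_cons_cons.mp hp
    rcases lt_or_gt_of_ne (fun h : b = x => hx (by simp [h])) with hbx | hxb
    · obtain ⟨a', b', p₁, p₂, ha', hb', hp₁, hp₂, hedges⟩ :=
        ih hbx hb (fun h => hx (List.mem_cons_of_mem j h))
      obtain ⟨s, rfl⟩ := hp₁.eq_cons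
      exact ⟨a', b', j :: b :: s, p₂, ha', hb', isPath_cons_cons.mpr ⟨hjb, hp₁⟩, hp₂,
        congrArg ((j, b) :: ·) hedges⟩
    · exact ⟨j, b, [j], b :: t, hj, hxb, isPath_singleton j, hb, rfl⟩

end IsPath

section Weights

variable {M : EdgeData Ω} {ω : Ω}

lemma pathWeight_eq_add_of_edges_eq {p p₁ p₂ : List ℤ} (h : edges p = edges p₁ ++ edges p₂) :
    pathWeight M p ω = pathWeight M p₁ ω + pathWeight M p₂ ω := by
  rw [pathWeight, h, List.map_append, List.sum_append, pathWeight, pathWeight]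

lemma pathWeight_eq_add_v_add_of_edges_eq {p p₁ p₂ : List ℤ} {a b : ℤ}
    (h : edges p = edges p₁ ++ (a, b) :: edges p₂) :
    pathWeight M p ω = pathWeight M p₁ ω + (M.v a b ω + pathWeight M p₂ ω) := by
  rw [pathWeight, h, List.map_append, List.sum_append, List.map_cons, List.sum_cons,
    pathWeight, pathWeight]

lemma w_self (j : ℤ) : w M j j ω = 0 := if_pos rfl

lemma w_of_ne {j k : ℤ} (h : j ≠ k) :
    w M j k ω = sSup {x | ∃ p, IsPath j k p ∧ pathWeight M p ω = x} := if_neg h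

lemma IsPath.pathWeight_le_w {j k : ℤ} {p : List ℤ} (hp : IsPath j k p) :
    pathWeight M p ω ≤ w M j k ω := by
  rcases eq_or_ne j k with rfl | hjk
  · obtain ⟨t, rfl⟩ := hp.eq_cons
    cases t with
    | nil => rw [w_self]; rfl
    | cons b t =>
      obtain ⟨hjb, hb⟩ := isPath_cons_cons.mp hp
      exact absurd hb.le hjb.not_ge
  · rw [w_of_ne hjk]
    exact le_sSup ⟨p, hp, rfl⟩

lemma w_add_w_le {j x k : ℤ} (hjx : j ≤ x) (hxk : x ≤ k) :
    w M j x ω + w M x k ω ≤ w M j k ω := by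
  rcases hjx.eq_or_lt with rfl | hjx
  · rw [w_self, zero_add]
  rcases hxk.eq_or_lt with rfl | hxk
  · rw [w_self, add_zero]
  refine EReal.add_le_of_forall_lt fun a ha b hb => ?_
  rw [w_of_ne hjx.ne] at ha
  rw [w_of_ne hxk.ne] at hb
  obtain ⟨_, ⟨p, hp, rfl⟩, hap⟩ := lt_sSup_iff.mp ha
  obtain ⟨_, ⟨q, hq, rfl⟩, hbq⟩ := lt_sSup_iff.mp hb
  obtain ⟨hpq, hedges⟩ := hp.append hq
  calc a + b ≤ pathWeight M p ω + pathWeight M q ω := (EReal.add_lt_add hap hbq).le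
    _ = pathWeight M (p ++ q.tail) ω := (pathWeight_eq_add_of_edges_eq hedges).symm
    _ ≤ w M j k ω := hpq.pathWeight_le_w

end Weights

namespace IsRenewal

variable {M : EdgeData Ω} {ω : Ω} {c₁ c₂ : ℝ} {x : ℤ}

lemma v_le_w_add_w (hc : c₂ ≤ c₁) (hx : IsRenewal M c₁ c₂ x ω) {a b : ℤ}
    (hax : a < x) (hxb : x < b) : M.v a b ω ≤ w M a x ω + w M x b ω := by
  obtain ⟨hAl, hA0, hAr⟩ := hx
  obtain ⟨j, rfl⟩ : ∃ j : ℕ, x - j = a := ⟨(x - a).toNat, by omega⟩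
  obtain ⟨i, rfl⟩ : ∃ i : ℕ, x + i = b := ⟨(b - x).toNat, by omega⟩
  have hi : 1 ≤ i := by omega
  have hj : 1 ≤ j := by omega
  have hc_ij : c₂ * (i + j) ≤ c₁ * j + c₁ * i := by
    linarith [mul_le_mul_of_nonneg_right hc (by positivity : (0 : ℝ) ≤ i + j)]
  calc M.v (x - j) (x + i) ω ≤ ((c₂ * (i + j) : ℝ) : EReal) := (hA0 i j hi hj).le
    _ ≤ ((c₁ * j : ℝ) : EReal) + ((c₁ * i : ℝ) : EReal) := by
      rw [← EReal.coe_add]; exact_mod_cast hc_ij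
    _ ≤ w M (x - j) x ω + w M x (x + i) ω := add_le_add (hAl j hj) (hAr i hi)

lemma pathWeight_le (hc : c₂ ≤ c₁) (hx : IsRenewal M c₁ c₂ x ω) {j k : ℤ}
    (hjx : j < x) (hxk : x < k) {p : List ℤ} (hp : IsPath j k p) :
    pathWeight M p ω ≤ w M j x ω + w M x k ω := by
  by_cases hxp : x ∈ p
  · obtain ⟨p₁, p₂, hp₁, hp₂, hedges⟩ := hp.split_of_mem hxp
    rw [pathWeight_eq_add_of_edges_eq hedges]
    exact add_le_add hp₁.pathWeight_le_w hp₂.pathWeight_le_w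
  · obtain ⟨a, b, p₁, p₂, hax, hxb, hp₁, hp₂, hedges⟩ := hp.exists_edge_over hjx hxk hxp
    calc pathWeight M p ω = pathWeight M p₁ ω + (M.v a b ω + pathWeight M p₂ ω) :=
          pathWeight_eq_add_v_add_of_edges_eq hedges
      _ ≤ w M j a ω + ((w M a x ω + w M x b ω) + w M b k ω) :=
          add_le_add hp₁.pathWeight_le_w
            (add_le_add (hx.v_le_w_add_w hc hax hxb) hp₂.pathWeight_le_w)
      _ = (w M j a ω + w M a x ω) + (w M x b ω + w M b k ω) := by
          rw [add_assoc, add_assoc]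
      _ ≤ w M j x ω + w M x k ω :=
          add_le_add (w_add_w_le hp₁.le hax.le) (w_add_w_le hxb.le hp₂.le)

lemma w_eq_add (hc : c₂ ≤ c₁) (hx : IsRenewal M c₁ c₂ x ω) {j k : ℤ}
    (hjx : j ≤ x) (hxk : x ≤ k) : w M j k ω = w M j x ω + w M x k ω := by
  rcases hjx.eq_or_lt with rfl | hjx
  · rw [w_self, zero_add]
  rcases hxk.eq_or_lt with rfl | hxk
  · rw [w_self, add_zero]
  refine le_antisymm ?_ (w_add_w_le hjx.le hxk.le)
  rw [w_of_ne (hjx.trans hxk).ne]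
  exact sSup_le fun _ ⟨p, hp, hw⟩ => hw ▸ hx.pathWeight_le hc hjx hxk hp

end IsRenewal

lemma w_eq_add_sum_of_isRenewal {M : EdgeData Ω} {ω : Ω} {c₁ c₂ : ℝ} (hc : c₂ ≤ c₁)
    {Γ : ℕ → ℤ} (hΓ : Monotone Γ) (hren : ∀ k, IsRenewal M c₁ c₂ (Γ k) ω)
    {j : ℤ} (hj : j ≤ Γ 0) (m : ℕ) {n : ℤ} (hn : Γ m ≤ n) :
    w M j n ω = w M j (Γ 0) ω + ∑ k ∈ Finset.range m, w M (Γ k) (Γ (k + 1)) ω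
      + w M (Γ m) n ω := by
  induction m generalizing n with
  | zero => simpa using (hren 0).w_eq_add hc hj hn
  | succ m ih =>
    rw [ih ((hΓ m.le_succ).trans hn), (hren (m + 1)).w_eq_add hc (hΓ m.le_succ) hn,
      Finset.sum_range_succ, add_assoc, add_assoc, add_assoc]

theorem weight_decomposition_general {Ω : Type} [MeasureSpace Ω]
    (S : RenewalSetting Ω) :
    ∀ᵐ ω ∂ℙ, ∀ n m : ℕ, S.Γ (m : ℤ) ω ≤ (n : ℤ) →
      w S.toEdgeData 0 (n : ℤ) ω
        = w S.toEdgeData 0 (S.Γ 0 ω) ω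
          + (∑ k ∈ Finset.range m,
              w S.toEdgeData (S.Γ (k : ℤ) ω) (S.Γ ((k : ℤ) + 1) ω) ω)
          + w S.toEdgeData (S.Γ (m : ℤ) ω) (n : ℤ) ω := by
  filter_upwards [S.Γ_spec] with ω hω n m hmn
  obtain ⟨hmono, -, h0, hren, -⟩ := hω
  have hdecomp := w_eq_add_sum_of_isRenewal S.adm.2.1 (hmono.monotone.comp Nat.mono_cast)
    (fun k => hren k) h0 m hmn
  simpa only [Function.comp_apply, Nat.cast_zero, Nat.cast_succ] using hdecomp

/-- **The regenerative decomposition.** Almost surely, for all `n, m ≥ 0` with `Γ_m ≤ n`,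
`w_{0,n} = w_{0,Γ₀} + w_{Γ₀,Γ₁} + ⋯ + w_{Γ_{m-1},Γ_m} + w_{Γ_m,n}`
(with the convention `w_{j,j} = 0`). -/
theorem weight_decomposition {Ω : Type} [MeasureSpace Ω]
    [IsProbabilityMeasure (ℙ : Measure Ω)]
    (S : RenewalSetting Ω) :
    ∀ᵐ ω ∂ℙ, ∀ n m : ℕ, S.Γ (m : ℤ) ω ≤ (n : ℤ) →
      w S.toEdgeData 0 (n : ℤ) ω
        = w S.toEdgeData 0 (S.Γ 0 ω) ω
          + (∑ k ∈ Finset.range m,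
              w S.toEdgeData (S.Γ (k : ℤ) ω) (S.Γ ((k : ℤ) + 1) ω) ω)
          + w S.toEdgeData (S.Γ (m : ℤ) ω) (n : ℤ) ω :=
  weight_decomposition_general S

end MaxPathWeight
end
end
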